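/- Let R be a commutative ring, A an Artinian R-module, and S a multiplicatively closed subset of R. Then the localization S⁻¹A, regarded as an R-module, is isomorphic to a submodule of A; that is, there exists an injective R-linear map from S⁻¹A to A. -/

import Mathlib

/-!
Call `b` self-divisible when `b ∈ R ∙ (s • b)` for all `s ∈ S`, i.e. every `s ∈ S` acts
invertibly on `R ∙ b`. These elements form a submodule `G` on which `S` acts bijectively and which
meets the `S`-torsion `T` trivially. The Artinian hypothesis enters once: a minimal member
`R ∙ (s₀ • a)` of the family `R ∙ (s • a)` has `s₀ • a` self-divisible, which splits `a` into a part
in `G` and a part killed by `s₀`. Hence `A = G ⊕ T`, the projection `A → G` is a localization at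
`S`, and `S⁻¹A ≅ G ⊆ A`.
-/

universe u v

namespace Submodule

variable {R : Type*} [CommRing R] (S : Submonoid R) (M : Type*) [AddCommGroup M] [Module R M]

def selfDivisible : Submodule R M where
  carrier := {b | ∀ s : S, b ∈ R ∙ ((s : R) • b)}
  zero_mem' := by simp
  add_mem' := by
    intro b c hb hc s
    obtain ⟨u, hu⟩ := mem_span_singleton.mp (hb s)
    obtain ⟨v, hv⟩ := mem_span_singleton.mp (hc s)
    refine mem_span_singleton.mpr ⟨u + v - s * u * v, ?_⟩
    linear_combination (norm := module) (1 - v * s) • hu + (1 - u * s) • hv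
  smul_mem' := by
    intro r b hb s
    obtain ⟨u, hu⟩ := mem_span_singleton.mp (hb s)
    exact mem_span_singleton.mpr ⟨u, by rw [smul_comm (s : R) r, smul_comm u r, hu]⟩

variable {S M}

theorem isUnit_algebraMap_end_selfDivisible (s : S) :
    IsUnit (algebraMap R (Module.End R (selfDivisible S M)) s) := by
  refine (Module.End.isUnit_iff _).mpr ⟨fun x y hxy ↦ ?_, fun x ↦ ?_⟩
  · have hsxy : (s : R) • ((x : M) - y) = 0 := by
      rw [smul_sub, sub_eq_zero]
      exact congrArg Subtype.val hxy
    obtain ⟨u, hu⟩ := mem_span_singleton.mp ((x - y).2 s)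
    push_cast at hu
    exact Subtype.ext <| sub_eq_zero.mp <| by rw [← hu, hsxy, smul_zero]
  · obtain ⟨u, hu⟩ := mem_span_singleton.mp (x.2 s)
    exact ⟨u • x, Subtype.ext <| by simpa [smul_comm (s : R) u] using hu⟩

theorem disjoint_selfDivisible_torsion' :
    Disjoint (selfDivisible S M) (torsion' R M S) := by
  refine disjoint_def.mpr fun x hx ⟨s, hs⟩ ↦ ?_
  obtain ⟨u, hu⟩ := mem_span_singleton.mp (hx s)
  rw [← hu, ← Submonoid.smul_def, hs, smul_zero]

theorem exists_smul_mem_selfDivisible [IsArtinian R M] (a : M) :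
    ∃ s : S, (s : R) • a ∈ selfDivisible S M := by
  obtain ⟨_, ⟨s, rfl⟩, hmin⟩ := IsArtinian.set_has_minimal
    (Set.range fun s : S ↦ R ∙ ((s : R) • a)) ⟨_, 1, rfl⟩
  refine ⟨s, fun t ↦ ?_⟩
  have hle : R ∙ ((t : R) • (s : R) • a) ≤ R ∙ ((s : R) • a) :=
    span_singleton_smul_le R (t : R) _
  have heq : R ∙ ((t : R) • (s : R) • a) = R ∙ ((s : R) • a) :=
    hle.lt_or_eq.resolve_left (hmin _ ⟨t * s, by simp [mul_smul]⟩)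
  rw [heq]
  exact mem_span_singleton_self _

theorem codisjoint_selfDivisible_torsion' [IsArtinian R M] :
    Codisjoint (selfDivisible S M) (torsion' R M S) := by
  refine codisjoint_iff.mpr <| eq_top_iff'.mpr fun a ↦ ?_
  obtain ⟨s, hs⟩ := exists_smul_mem_selfDivisible (S := S) a
  obtain ⟨u, hu⟩ := mem_span_singleton.mp (hs s)
  have hg : u • (s : R) • a ∈ selfDivisible S M := smul_mem _ u hs
  have htors : a - u • (s : R) • a ∈ torsion' R M S :=
    ⟨s, by rw [Submonoid.smul_def, smul_sub, smul_comm (s : R) u, hu, sub_self]⟩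
  exact mem_sup.mpr ⟨_, hg, _, htors, add_sub_cancel _ _⟩

theorem isCompl_selfDivisible_torsion' [IsArtinian R M] :
    IsCompl (selfDivisible S M) (torsion' R M S) :=
  ⟨disjoint_selfDivisible_torsion', codisjoint_selfDivisible_torsion'⟩

theorem isLocalizedModule_projectionOnto_selfDivisible [IsArtinian R M] :
    IsLocalizedModule S
      ((selfDivisible S M).projectionOnto _ (isCompl_selfDivisible_torsion' (S := S))) where
  map_units := isUnit_algebraMap_end_selfDivisible
  surj y := ⟨(y, 1), by simp [projectionOnto_apply_left]⟩
  exists_of_eq {x y} hxy := by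
    obtain ⟨s, hs⟩ : x - y ∈ torsion' R M S := by
      rwa [← projectionOnto_apply_eq_zero_iff isCompl_selfDivisible_torsion', map_sub,
        sub_eq_zero]
    exact ⟨s, by rwa [smul_sub, sub_eq_zero] at hs⟩

end Submodule

theorem localization_of_artinian_embeds
    {R : Type u} [CommRing R] (S : Submonoid R)
    (A : Type v) [AddCommGroup A] [Module R A] [IsArtinian R A] :
    ∃ f : LocalizedModule S A →ₗ[R] A, Function.Injective f := by
  have := Submodule.isLocalizedModule_projectionOnto_selfDivisible (S := S) (M := A)
  let e := IsLocalizedModule.iso S ((Submodule.selfDivisible S A).projectionOnto _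
    (Submodule.isCompl_selfDivisible_torsion' (S := S)))
  exact ⟨(Submodule.selfDivisible S A).subtype ∘ₗ e.toLinearMap,
    Subtype.val_injective.comp e.injective⟩
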